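/- arXiv:0906.5408 — 6 statements merged into one kernel-verified Lean document; each statement's English description precedes it below -/
import Mathlib

section
/- Let A be a C*-algebra, S a set, and K : S × S → A an A-positive definite kernel. For all n, m : ℕ, s : Fin n → S, t : Fin m → S, a : Fin n → A, b : Fin m → A one has the norm Schwarz inequality ‖∑_{i,k} (a i)⋆ * K(s i, t k) * (b k)‖² ≤ ‖∑_{i,j} (a i)⋆ * K(s i, s j) * (a j)‖ · ‖∑_{k,l} (b k)⋆ * K(t k, t l) * (b l)‖. -/
/-!
Positivity of `K` on the concatenated family `(a · c, b)` gives
`0 ≤ c⋆ P c + c⋆ Z + Z' c + Q` for every `c ∈ A`, where `P`, `Q` are the diagonal sums and `Z`,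
`Z'` the two cross sums; replacing `b` by `λ • b` and polarizing over `λ ∈ {1, i}` shows
`Z' = Z⋆`. Taking `c = -r Z` and using `Z⋆ P Z ≤ ‖P‖ Z⋆ Z` yields
`2 r ‖Z‖² ≤ r² ‖P‖ ‖Z‖² + ‖Q‖` for all `r > 0`, a quadratic inequality whose discriminant
condition is `‖Z‖² ≤ ‖P‖ ‖Q‖`.
-/

open Complex in
theorem eq_star_of_forall_isSelfAdjoint_smul_add_smul {E : Type*} [AddCommGroup E] [Module ℂ E]
    [StarAddMonoid E] [StarModule ℂ E] {z w : E}
    (h : ∀ c : ℂ, IsSelfAdjoint (c • z + star c • w)) : w = star z := by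
  have h₁ := (h 1).star_eq
  have h₂ := (h I).star_eq
  simp only [star_add, star_smul, star_one, one_smul, RCLike.star_def, map_neg, conj_I,
    neg_neg] at h₁ h₂
  have : (2 : ℂ) • star w = (2 : ℂ) • z := by
    linear_combination (norm := skip) h₁ - I • h₂
    simp only [smul_add, smul_neg, smul_smul, neg_smul, I_mul_I]
    module
  rw [← star_star w, smul_right_injective E two_ne_zero this]

theorem le_mul_of_forall_two_mul_le {p q x : ℝ} (hp : 0 ≤ p) (hq : 0 ≤ q) (hx : 0 ≤ x)
    (h : ∀ r, 0 < r → 2 * r * x ≤ r ^ 2 * p * x + q) : x ≤ p * q := by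
  have := discrim_le_zero (a := p * x) (b := -2 * x) (c := q) fun r => by
    rcases le_or_gt r 0 with hr | hr
    · nlinarith [mul_nonneg hp hx]
    · nlinarith [h r hr]
  unfold discrim at this
  rcases hx.eq_or_lt with rfl | hx
  · positivity
  · nlinarith

section CStarAlgebra

variable {A : Type*} [NonUnitalCStarAlgebra A] [PartialOrder A] [StarOrderedRing A]

theorem smul_star_mul_self_le_of_forall_nonneg {P Q Z : A} (hP : IsSelfAdjoint P)
    (h : ∀ c, 0 ≤ star c * P * c + star c * Z + star Z * c + Q) (r : ℝ) :
    (2 * r) • (star Z * Z) ≤ (r ^ 2 * ‖P‖) • (star Z * Z) + Q := by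
  have hc := h ((-r) • Z)
  simp only [star_smul, star_trivial, smul_mul_assoc, mul_smul_comm, smul_smul] at hc
  calc (2 * r) • (star Z * Z)
      ≤ (2 * r) • (star Z * Z) + ((-r * -r) • (star Z * P * Z) + (-r) • (star Z * Z)
          + (-r) • (star Z * Z) + Q) := le_add_of_nonneg_right hc
    _ = r ^ 2 • (star Z * P * Z) + Q := by module
    _ ≤ r ^ 2 • (‖P‖ • (star Z * Z)) + Q := by
        gcongr
        exact CStarAlgebra.star_left_conjugate_le_norm_smul
    _ = (r ^ 2 * ‖P‖) • (star Z * Z) + Q := by rw [smul_smul]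

theorem norm_sq_le_norm_mul_norm_of_forall_nonneg {P Q Z : A} (hP : IsSelfAdjoint P)
    (h : ∀ c, 0 ≤ star c * P * c + star c * Z + star Z * c + Q) :
    ‖Z‖ ^ 2 ≤ ‖P‖ * ‖Q‖ := by
  have hX : ‖star Z * Z‖ = ‖Z‖ ^ 2 := by rw [CStarRing.norm_star_mul_self, sq]
  rw [← hX]
  refine le_mul_of_forall_two_mul_le (norm_nonneg _) (norm_nonneg _) (norm_nonneg _)
    fun r hr => ?_
  calc 2 * r * ‖star Z * Z‖ = ‖(2 * r) • (star Z * Z)‖ := by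
        rw [norm_smul, Real.norm_of_nonneg (by positivity)]
    _ ≤ ‖(r ^ 2 * ‖P‖) • (star Z * Z) + Q‖ :=
        CStarAlgebra.norm_le_norm_of_nonneg_of_le (smul_nonneg (by positivity)
          (star_mul_self_nonneg Z)) (smul_star_mul_self_le_of_forall_nonneg hP h r)
    _ ≤ r ^ 2 * ‖P‖ * ‖star Z * Z‖ + ‖Q‖ := by
        grw [norm_add_le, norm_smul, Real.norm_of_nonneg (by positivity)]

end CStarAlgebra

section kernelForm

variable {A S : Type*}

def kernelForm [AddCommMonoid A] [Mul A] [Star A] (K : S × S → A) {n m : ℕ} (s : Fin n → S)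
    (t : Fin m → S) (a : Fin n → A) (b : Fin m → A) : A :=
  ∑ i, ∑ k, star (a i) * K (s i, t k) * b k

def IsPosDefKernel [AddCommMonoid A] [Mul A] [Star A] [LE A] (K : S × S → A) : Prop :=
  ∀ (n : ℕ) (s : Fin n → S) (a : Fin n → A), 0 ≤ kernelForm K s s a a

variable (K : S × S → A) {n m : ℕ} (s : Fin n → S) (t : Fin m → S) (a : Fin n → A)
  (b : Fin m → A)

theorem kernelForm_append [NonUnitalNonAssocSemiring A] [Star A] :
    kernelForm K (Fin.append s t) (Fin.append s t) (Fin.append a b) (Fin.append a b) =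
      kernelForm K s s a a + kernelForm K s t a b + kernelForm K t s b a +
        kernelForm K t t b b := by
  simp only [kernelForm, Fin.sum_univ_add, Fin.append_left, Fin.append_right,
    Finset.sum_add_distrib]
  abel

theorem kernelForm_mul_right [NonUnitalSemiring A] [Star A] (c : A) :
    kernelForm K s t a (fun k => b k * c) = kernelForm K s t a b * c := by
  simp only [kernelForm, Finset.sum_mul, mul_assoc]

theorem kernelForm_mul_left [NonUnitalSemiring A] [StarMul A] (c : A) :
    kernelForm K s t (fun i => a i * c) b = star c * kernelForm K s t a b := by
  simp only [kernelForm, Finset.mul_sum, star_mul, mul_assoc]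

theorem kernelForm_smul_right {R : Type*} [NonUnitalNonAssocSemiring A] [Star A] [Monoid R]
    [DistribMulAction R A] [SMulCommClass R A A] (c : R) :
    kernelForm K s t a (c • b) = c • kernelForm K s t a b := by
  simp only [kernelForm, Pi.smul_apply, Finset.smul_sum, mul_smul_comm]

theorem kernelForm_smul_left {R : Type*} [NonUnitalNonAssocSemiring A] [StarAddMonoid A]
    [Monoid R] [StarMul R] [DistribMulAction R A] [StarModule R A] [IsScalarTower R A A]
    (c : R) : kernelForm K s t (c • a) b = star c • kernelForm K s t a b := by
  simp only [kernelForm, Pi.smul_apply, Finset.smul_sum, star_smul, smul_mul_assoc]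

end kernelForm

namespace IsPosDefKernel

variable {A S : Type*} {K : S × S → A} {n m : ℕ} (s : Fin n → S) (t : Fin m → S)
  (a : Fin n → A) (b : Fin m → A)

theorem nonneg_block [NonUnitalNonAssocSemiring A] [Star A] [LE A] (hK : IsPosDefKernel K) :
    0 ≤ kernelForm K s s a a + kernelForm K s t a b + kernelForm K t s b a +
      kernelForm K t t b b :=
  kernelForm_append K s t a b ▸ hK _ _ _

variable [NonUnitalRing A] [StarRing A] [PartialOrder A] [StarOrderedRing A]

theorem isSelfAdjoint_cross (hK : IsPosDefKernel K) :
    IsSelfAdjoint (kernelForm K s t a b + kernelForm K t s b a) := by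
  have h := (IsSelfAdjoint.of_nonneg (hK.nonneg_block s t a b)).sub
    (IsSelfAdjoint.of_nonneg (hK _ s a)) |>.sub (IsSelfAdjoint.of_nonneg (hK _ t b))
  convert h using 1
  abel

theorem kernelForm_swap [Module ℂ A] [StarModule ℂ A] [IsScalarTower ℂ A A]
    [SMulCommClass ℂ A A] (hK : IsPosDefKernel K) :
    kernelForm K t s b a = star (kernelForm K s t a b) :=
  eq_star_of_forall_isSelfAdjoint_smul_add_smul fun c => by
    simpa only [kernelForm_smul_right, kernelForm_smul_left] using
      hK.isSelfAdjoint_cross s t a (c • b)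

end IsPosDefKernel

/-- The norm Schwarz inequality for an `A`-positive definite kernel. -/
theorem kernel_norm_schwarz_inequality
    {A : Type*} [NonUnitalCStarAlgebra A] [PartialOrder A] [StarOrderedRing A]
    {S : Type*} (K : S × S → A)
    (hK : ∀ (n : ℕ) (s : Fin n → S) (a : Fin n → A),
      0 ≤ ∑ i, ∑ j, star (a i) * K (s i, s j) * a j) :
    ∀ (n m : ℕ) (s : Fin n → S) (t : Fin m → S) (a : Fin n → A) (b : Fin m → A),
      ‖∑ i, ∑ k, star (a i) * K (s i, t k) * b k‖ ^ 2 ≤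
        ‖∑ i, ∑ j, star (a i) * K (s i, s j) * a j‖ *
          ‖∑ k, ∑ l, star (b k) * K (t k, t l) * b l‖ := by
  intro n m s t a b
  have hK : IsPosDefKernel K := hK
  refine norm_sq_le_norm_mul_norm_of_forall_nonneg (.of_nonneg (hK n s a)) fun c => ?_
  have h := hK.nonneg_block s t (fun i => a i * c) b
  rw [kernelForm_mul_left, kernelForm_mul_right, kernelForm_mul_left, kernelForm_mul_right,
    hK.kernelForm_swap s t a b, ← mul_assoc] at h
  exact h
end

section
/- Let S be a *-semigroup, A a C*-algebra, and ω : S → A an A-positive definite function. Then for every q ∈ S with q⋆ = q and all n : ℕ, s : Fin n → S, a : Fin n → A one has ‖∑_{i,j} (a i)⋆ * ω((s i)⋆ * q * (s j)) * (a j)‖² ≤ ‖∑_{i,j} (a i)⋆ * ω((s i)⋆ * q * q * (s j)) * (a j)‖ · ‖∑_{i,j} (a i)⋆ * ω((s i)⋆ * (s j)) * (a j)‖. (This is the iterated-Schwarz step used in the proof of the equivalence of the boundedness conditions.) -/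
/-!
Testing positive definiteness on the family `(s₁, …, sₙ, q s₁, …, q sₙ)` with coefficients
`(a₁, …, aₙ, c a₁, …, c aₙ)`, `c : ℝ`, shows that `C + 2c B + c² D ≥ 0` for all real `c`, where
`C`, `B`, `D` are the three sums of the statement. Using `c` and `-c` sandwiches `2c B` between
`±(C + c² D)`, so `2|c| ‖B‖ ≤ ‖C‖ + c² ‖D‖`, and the discriminant of this real quadratic gives
`‖B‖² ≤ ‖D‖ ‖C‖`.
-/

namespace CStarAlgebra

lemma norm_le_of_neg_algebraMap_le_of_le_algebraMap {A : Type*} [CStarAlgebra A]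
    [PartialOrder A] [StarOrderedRing A] {a : A} (ha : IsSelfAdjoint a) {r : ℝ} (hr : 0 ≤ r)
    (h₁ : -algebraMap ℝ A r ≤ a) (h₂ : a ≤ algebraMap ℝ A r) : ‖a‖ ≤ r := by
  obtain _ | _ := subsingleton_or_nontrivial A
  · simp [Subsingleton.elim a 0, hr]
  rw [neg_le] at h₁
  rcases norm_or_neg_norm_mem_spectrum ha with h | h
  · exact (le_algebraMap_iff_spectrum_le ha).1 h₂ _ h
  · exact (le_algebraMap_iff_spectrum_le ha.neg).1 h₁ _ (by simpa [← spectrum.neg_eq] using h)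

variable {A : Type*} [NonUnitalCStarAlgebra A] [PartialOrder A] [StarOrderedRing A]

lemma norm_le_norm_of_neg_le_of_le {a b : A} (h₁ : -b ≤ a) (h₂ : a ≤ b) : ‖a‖ ≤ ‖b‖ := by
  have hsub : 0 ≤ b - a := sub_nonneg.2 h₂
  have hadd : 0 ≤ b + a := neg_le_iff_add_nonneg'.1 h₁
  have ha : IsSelfAdjoint a := by
    have : a = (2⁻¹ : ℝ) • ((b + a) - (b - a)) := by module
    rw [this]
    exact (IsSelfAdjoint.all _).smul ((IsSelfAdjoint.of_nonneg hadd).sub (.of_nonneg hsub))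
  have hb : 0 ≤ b := by
    have : b = (2⁻¹ : ℝ) • ((b - a) + (b + a)) := by module
    rw [this]
    exact smul_nonneg (by norm_num) (add_nonneg hsub hadd)
  rw [← Unitization.norm_inr (𝕜 := ℂ) a, ← Unitization.norm_inr (𝕜 := ℂ) b]
  have hb' : IsSelfAdjoint (b : Unitization ℂ A) := (IsSelfAdjoint.of_nonneg hb).inr ℂ
  have hle := hb'.le_algebraMap_norm_self
  refine norm_le_of_neg_algebraMap_le_of_le_algebraMap (ha.inr ℂ) (norm_nonneg _) ?_ ?_
  · refine (neg_le_neg hle).trans ?_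
    rw [← Unitization.inr_neg]
    exact (Unitization.inr_le_iff _ _ (.neg hb'.of_inr) ha).2 h₁
  · exact ((Unitization.inr_le_iff _ _ ha (.of_nonneg hb)).2 h₂).trans hle

lemma norm_sq_le_of_forall_quadratic_nonneg {x y z : A}
    (h : ∀ c : ℝ, 0 ≤ x + (2 * c) • y + c ^ 2 • z) : ‖y‖ ^ 2 ≤ ‖z‖ * ‖x‖ := by
  have hquad (c : ℝ) : 0 ≤ ‖z‖ * (c * c) + (-2 * ‖y‖) * c + ‖x‖ := by
    have hsandwich : ‖(2 * c) • y‖ ≤ ‖x + c ^ 2 • z‖ := by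
      refine norm_le_norm_of_neg_le_of_le (neg_le_iff_add_nonneg.2 ?_) (sub_nonneg.1 ?_)
      · convert h c using 1; abel
      · convert h (-c) using 1; module
    have : 2 * c * ‖y‖ ≤ ‖x‖ + c ^ 2 * ‖z‖ :=
      calc 2 * c * ‖y‖ ≤ ‖(2 * c) • y‖ := by
            rw [norm_smul, Real.norm_eq_abs]
            gcongr
            exact le_abs_self _
        _ ≤ ‖x‖ + ‖c ^ 2 • z‖ := hsandwich.trans (norm_add_le _ _)
        _ = ‖x‖ + c ^ 2 * ‖z‖ := by rw [norm_smul, Real.norm_eq_abs, abs_sq]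
    linarith
  have := discrim_le_zero hquad
  rw [discrim] at this
  linarith

end CStarAlgebra

def IsPositiveDefinite {S A : Type*} [Mul S] [Star S] [NonUnitalNonAssocSemiring A] [Star A]
    [PartialOrder A] (ω : S → A) : Prop :=
  ∀ (n : ℕ) (s : Fin n → S) (a : Fin n → A), 0 ≤ ∑ i, ∑ j, star (a i) * ω (star (s i) * s j) * a j

lemma IsPositiveDefinite.quadratic_nonneg {S A : Type*} [Semigroup S] [StarMul S]
    [NonUnitalRing A] [StarRing A] [PartialOrder A] [Module ℝ A] [StarModule ℝ A]
    [IsScalarTower ℝ A A] [SMulCommClass ℝ A A] {ω : S → A} (hω : IsPositiveDefinite ω)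
    {q : S} (hq : star q = q) {n : ℕ} (s : Fin n → S) (a : Fin n → A) (c : ℝ) :
    0 ≤ ∑ i, ∑ j, star (a i) * ω (star (s i) * s j) * a j
      + (2 * c) • ∑ i, ∑ j, star (a i) * ω (star (s i) * q * s j) * a j
      + c ^ 2 • ∑ i, ∑ j, star (a i) * ω (star (s i) * q * q * s j) * a j := by
  have h := hω (n + n) (Fin.append s fun i ↦ q * s i) (Fin.append a fun i ↦ c • a i)
  simp only [Fin.sum_univ_add, Fin.append_left, Fin.append_right, star_smul, star_trivial,
    star_mul, hq, smul_mul_assoc, mul_smul_comm, ← Finset.smul_sum, ← mul_assoc,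
    Finset.sum_add_distrib] at h
  convert h using 1
  module

/-- The iterated-Schwarz step: for an `A`-positive definite function `ω` on a
*-semigroup `S` and a selfadjoint element `q` of `S`,
`‖∑ (a i)⋆ ω((s i)⋆ q (s j)) (a j)‖² ≤
  ‖∑ (a i)⋆ ω((s i)⋆ q q (s j)) (a j)‖ * ‖∑ (a i)⋆ ω((s i)⋆ (s j)) (a j)‖`. -/
theorem iterated_schwarz_step
    {S : Type*} [Semigroup S] [StarMul S]
    {A : Type*} [NonUnitalCStarAlgebra A] [PartialOrder A] [StarOrderedRing A]
    (ω : S → A)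
    (hpd : ∀ (n : ℕ) (s : Fin n → S) (a : Fin n → A),
      0 ≤ ∑ i, ∑ j, star (a i) * ω (star (s i) * s j) * a j) :
    ∀ (q : S), star q = q → ∀ (n : ℕ) (s : Fin n → S) (a : Fin n → A),
      ‖∑ i, ∑ j, star (a i) * ω (star (s i) * q * s j) * a j‖ ^ 2 ≤
        ‖∑ i, ∑ j, star (a i) * ω (star (s i) * q * q * s j) * a j‖ *
          ‖∑ i, ∑ j, star (a i) * ω (star (s i) * s j) * a j‖ := fun _ hq _ s a ↦
  CStarAlgebra.norm_sq_le_of_forall_quadratic_nonneg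
    (IsPositiveDefinite.quadratic_nonneg hpd hq s a)
end

section
/- Let S be a *-semigroup, A a unital C*-algebra, and ω : S → A an A-positive definite function. The following are equivalent: (α) ω(s⋆) = ω(s)⋆ for all s ∈ S, and there is a constant c > 0 such that c • ∑_{i,j} (a i)⋆ * ω(s i)⋆ * ω(s j) * (a j) ≤ ∑_{i,j} (a i)⋆ * ω((s i)⋆ * (s j)) * (a j) for all n : ℕ, s : Fin n → S, a : Fin n → A; (β) ω extends to a positive definite function on the unitization of S, i.e. there exists b ∈ A such that for all n : ℕ, s : Fin n → S, a : Fin n → A and a₀ ∈ A one has 0 ≤ ∑_{i,j} (a i)⋆ * ω((s i)⋆ * (s j)) * (a j) + ∑_i (a i)⋆ * ω((s i)⋆) * a₀ + ∑_j a₀⋆ * ω(s j) * (a j) + a₀⋆ * b * a₀. -/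
/-!
Put `v = ∑ j, ω (s j) * a j`. Under Hermitian symmetry the cross terms of (β) are
`star v * a₀ + star a₀ * v` and the left side of the inequality in (α) is `c • (star v * v)`,
so both directions are statements about `Q + star v * a₀ + star a₀ * v + star a₀ * b * a₀`
for a single `v`. For (α) ⇒ (β) take `b = c⁻¹ • 1` and complete the square. For (β) ⇒ (α),
`n = 0` gives `0 ≤ b`; the `n = 1` instances are self-adjoint, and testing them with `a₀ = 1`
and `a₀ = I` yields the symmetry; finally `a₀ = -t • v`, together with
`star v * b * v ≤ ‖b‖ • (star v * v)`, gives the inequality with `c = (‖b‖ + 1)⁻¹`.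
-/

open Finset

section StarRing

variable {ι A : Type*} [Fintype ι] [Ring A]

theorem sum_mul_mul (w a : ι → A) (x : A) :
    ∑ i, x * w i * a i = x * ∑ i, w i * a i := by
  simp only [mul_sum, mul_assoc]

variable [StarRing A]

theorem sum_star_mul_star_mul (w a : ι → A) (x : A) :
    ∑ i, star (a i) * star (w i) * x = star (∑ i, w i * a i) * x := by
  simp only [star_sum, star_mul, sum_mul]

theorem sum_sum_star_mul_star_mul_mul (w a : ι → A) :
    ∑ i, ∑ j, star (a i) * star (w i) * w j * a j =
      star (∑ i, w i * a i) * ∑ i, w i * a i := by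
  simp only [sum_mul_sum, star_sum, star_mul, mul_assoc]

end StarRing

theorem eq_star_of_forall_isSelfAdjoint {A : Type*} [Ring A] [StarRing A] [Algebra ℂ A]
    [StarModule ℂ A] {x y : A} (h : ∀ z : A, IsSelfAdjoint (x * z + star z * y)) :
    x = star y := by
  have h₁ : star x + star y = x + y := by simpa using (h 1).star_eq
  have h₂ : -Complex.I • star x + Complex.I • star y = Complex.I • x - Complex.I • y := by
    simpa [star_smul, sub_eq_add_neg] using (h (Complex.I • 1)).star_eq
  have : (2 * Complex.I) • star y = (2 * Complex.I) • x := by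
    have := congrArg (Complex.I • ·) h₁
    simp only [smul_add] at this
    rw [two_mul, add_smul, add_smul]
    linear_combination (norm := module) this + h₂
  exact (smul_right_injective A (by simp) this).symm

theorem IsSelfAdjoint.of_nonneg_add_add {A : Type*} [NonUnitalRing A] [StarRing A]
    [PartialOrder A] [StarOrderedRing A] {p x q : A} (hp : 0 ≤ p) (hq : 0 ≤ q) (h : 0 ≤ p + x + q) :
    IsSelfAdjoint x := by
  simpa using (h.isSelfAdjoint.sub hq.isSelfAdjoint).sub hp.isSelfAdjoint

section CStarAlgebra

variable {A : Type*} [CStarAlgebra A] [PartialOrder A] [StarOrderedRing A]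

theorem nonneg_add_cross_add_inv_smul_of_smul_le {c : ℝ} (hc : 0 < c) {Q v : A}
    (hQ : c • (star v * v) ≤ Q) (a₀ : A) :
    0 ≤ Q + star v * a₀ + star a₀ * v + star a₀ * (c⁻¹ • 1) * a₀ := by
  have hsq : c • (star v * v) + star v * a₀ + star a₀ * v + star a₀ * (c⁻¹ • 1) * a₀ =
      c • (star (v + c⁻¹ • a₀) * (v + c⁻¹ • a₀)) := by
    simp only [star_add, star_smul, star_trivial, add_mul, mul_add, smul_mul_assoc,
      mul_smul_comm, mul_one]
    match_scalars <;> field_simp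
  calc (0 : A) ≤ c • (star (v + c⁻¹ • a₀) * (v + c⁻¹ • a₀)) :=
        smul_nonneg hc.le (star_mul_self_nonneg _)
    _ = _ := hsq.symm
    _ ≤ _ := by gcongr

theorem inv_norm_add_one_smul_le_of_forall_nonneg {b Q v : A} (hb : IsSelfAdjoint b)
    (h : ∀ a₀, 0 ≤ Q + star v * a₀ + star a₀ * v + star a₀ * b * a₀) :
    (‖b‖ + 1)⁻¹ • (star v * v) ≤ Q := by
  set t := (‖b‖ + 1)⁻¹
  have ht : 0 < t := by positivity
  have htb : t * t * ‖b‖ ≤ t := by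
    calc t * t * ‖b‖ ≤ t * (t * (‖b‖ + 1)) := by nlinarith
      _ = t := by rw [inv_mul_cancel₀ (by positivity), mul_one]
  have hconj : (t * t) • (star v * b * v) ≤ t • (star v * v) :=
    calc (t * t) • (star v * b * v) ≤ (t * t) • (‖b‖ • (star v * v)) := by
          gcongr; exact CStarAlgebra.star_left_conjugate_le_norm_smul hb
      _ = (t * t * ‖b‖) • (star v * v) := smul_smul _ _ _
      _ ≤ t • (star v * v) := smul_le_smul_of_nonneg_right htb (star_mul_self_nonneg v)
  have hmin : Q + star v * -(t • v) + star (-(t • v)) * v + star (-(t • v)) * b * -(t • v) =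
      Q - ((2 * t) • (star v * v) - (t * t) • (star v * b * v)) := by
    simp only [star_neg, star_smul, star_trivial, mul_neg, neg_mul, smul_mul_assoc,
      mul_smul_comm]
    module
  calc t • (star v * v) = (2 * t) • (star v * v) - t • (star v * v) := by module
    _ ≤ (2 * t) • (star v * v) - (t * t) • (star v * b * v) := by gcongr
    _ ≤ Q := sub_nonneg.mp (hmin ▸ h (-(t • v)))

end CStarAlgebra

/-- For an `A`-positive definite function `ω` on a *-semigroup `S`, with `A` a
unital C*-algebra, condition (α) (Hermitian symmetry plus the quadratic inequality with a
constant `c > 0`) is equivalent to condition (β) (extendibility to a positive definite function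
on the unitization of `S`). -/
theorem extension_property_iff_extendible
    {S : Type*} [Semigroup S] [StarMul S]
    {A : Type*} [CStarAlgebra A] [PartialOrder A] [StarOrderedRing A]
    (ω : S → A)
    (hpd : ∀ (n : ℕ) (s : Fin n → S) (a : Fin n → A),
      0 ≤ ∑ i, ∑ j, star (a i) * ω (star (s i) * s j) * a j) :
    ((∀ s : S, ω (star s) = star (ω s)) ∧
      ∃ c : ℝ, 0 < c ∧ ∀ (n : ℕ) (s : Fin n → S) (a : Fin n → A),
        c • ∑ i, ∑ j, star (a i) * star (ω (s i)) * ω (s j) * a j ≤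
          ∑ i, ∑ j, star (a i) * ω (star (s i) * s j) * a j)
    ↔
    (∃ b : A, ∀ (n : ℕ) (s : Fin n → S) (a : Fin n → A) (a₀ : A),
      0 ≤ (∑ i, ∑ j, star (a i) * ω (star (s i) * s j) * a j) +
        (∑ i, star (a i) * ω (star (s i)) * a₀) +
        (∑ j, star a₀ * ω (s j) * a j) + star a₀ * b * a₀) := by
  constructor
  · rintro ⟨hsym, c, hc, hineq⟩
    refine ⟨c⁻¹ • 1, fun n s a a₀ => ?_⟩
    simp only [hsym]
    rw [sum_star_mul_star_mul, sum_mul_mul]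
    refine nonneg_add_cross_add_inv_smul_of_smul_le hc ?_ a₀
    simpa only [sum_sum_star_mul_star_mul_mul] using hineq n s a
  · rintro ⟨b, hb⟩
    have hb0 : 0 ≤ b := by simpa using hb 0 Fin.elim0 Fin.elim0 1
    have hsym (s : S) : ω (star s) = star (ω s) := by
      refine eq_star_of_forall_isSelfAdjoint fun a₀ => ?_
      refine .of_nonneg_add_add (p := ω (star s * s)) (q := star a₀ * b * a₀)
        (by simpa using hpd 1 (fun _ => s) (fun _ => 1)) (star_left_conjugate_nonneg hb0 a₀) ?_
      simpa [add_assoc] using hb 1 (fun _ => s) (fun _ => 1) a₀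
    refine ⟨hsym, (‖b‖ + 1)⁻¹, by positivity, fun n s a => ?_⟩
    rw [sum_sum_star_mul_star_mul_mul]
    refine inv_norm_add_one_smul_le_of_forall_nonneg hb0.isSelfAdjoint fun a₀ => ?_
    have h := hb n s a a₀
    simp only [hsym] at h
    rwa [sum_star_mul_star_mul, sum_mul_mul] at h
end

section
/- Let S be a *-semigroup, A a C*-algebra, E a Hilbert A-module, ω : S → A a function, e : S → E a family with ⟪e s, e t⟫ = ω(s⋆ * t) for all s, t ∈ S, and v ∈ E a vector with ω(s) = ⟪v, e s⟫ for all s ∈ S. Then for all n : ℕ, s : Fin n → S, a : Fin n → A one has ∑_{i,j} (a i)⋆ * ω(s i)⋆ * ω(s j) * (a j) ≤ ‖v‖² • ∑_{i,j} (a i)⋆ * ω((s i)⋆ * (s j)) * (a j). -/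
/-- The Hilbert C⋆-module class as it stood in the older Mathlib: a *right* module
(action of `Aᵐᵒᵖ`), with `⟪x, y <• a⟫ = ⟪x, y⟫ * a`. -/
class CStarModuleOld (A : outParam Type*) (E : Type*) [NonUnitalSemiring A] [StarRing A]
    [Module ℂ A] [AddCommGroup E] [Module ℂ E] [PartialOrder A] [SMul Aᵐᵒᵖ E] [Norm A] [Norm E]
    extends Inner A E where
  inner_add_right {x} {y} {z} : inner x (y + z) = inner x y + inner x z
  inner_self_nonneg {x} : 0 ≤ inner x x
  inner_self {x} : inner x x = 0 ↔ x = 0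
  inner_op_smul_right {a : A} {x y : E} : inner x (MulOpposite.op a • y) = inner x y * a
  inner_smul_right_complex {z : ℂ} {x} {y} : inner x (z • y) = z • inner x y
  star_inner x y : star (inner x y) = inner y x
  norm_eq_sqrt_norm_inner_self x : ‖x‖ = Real.sqrt ‖inner x x‖

/-! With `x = ∑ⱼ e(sⱼ) aⱼ` the hypotheses give `⟪v, x⟫ = ∑ⱼ ω(sⱼ) aⱼ` and
`⟪x, x⟫ = ∑ᵢⱼ aᵢ⋆ ω(sᵢ⋆ sⱼ) aⱼ`, so the inequality is the C⋆-valued Cauchy–Schwarz inequality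
`⟪x, v⟫ ⟪v, x⟫ ≤ ‖v‖² ⟪x, x⟫`. -/

open scoped InnerProductSpace
open MulOpposite (op)

namespace CStarModuleOld

section Algebraic

variable {A E : Type*} [NonUnitalRing A] [StarRing A] [Module ℂ A] [PartialOrder A] [Norm A]
  [AddCommGroup E] [Module ℂ E] [SMul Aᵐᵒᵖ E] [Norm E] [CStarModuleOld A E]

def innerAddMonoidHom (x : E) : E →+ A :=
  AddMonoidHom.mk' (inner A x) fun _ _ => inner_add_right

lemma inner_sub_right {x y z : E} : ⟪x, y - z⟫_A = ⟪x, y⟫_A - ⟪x, z⟫_A :=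
  map_sub (innerAddMonoidHom x) y z

lemma inner_zero_right {x : E} : ⟪x, 0⟫_A = 0 :=
  map_zero (innerAddMonoidHom x)

lemma inner_sum_right {ι : Type*} {s : Finset ι} {x : E} {y : ι → E} :
    ⟪x, ∑ i ∈ s, y i⟫_A = ∑ i ∈ s, ⟪x, y i⟫_A :=
  map_sum (innerAddMonoidHom x) y s

lemma inner_sub_left {x y z : E} : ⟪x - y, z⟫_A = ⟪x, z⟫_A - ⟪y, z⟫_A := by
  rw [← star_inner, inner_sub_right, star_sub, star_inner, star_inner]

lemma inner_sum_left {ι : Type*} {s : Finset ι} {x : ι → E} {y : E} :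
    ⟪∑ i ∈ s, x i, y⟫_A = ∑ i ∈ s, ⟪x i, y⟫_A := by
  simp only [← star_inner y, inner_sum_right, star_sum]

lemma inner_op_smul_left {a : A} {x y : E} : ⟪op a • x, y⟫_A = star a * ⟪x, y⟫_A := by
  rw [← star_inner, inner_op_smul_right, star_mul, star_inner]

lemma inner_sum_op_smul_sum_op_smul {ι κ : Type*} {s : Finset ι} {t : Finset κ}
    {a : ι → A} {b : κ → A} {x : ι → E} {y : κ → E} :
    ⟪∑ i ∈ s, op (a i) • x i, ∑ j ∈ t, op (b j) • y j⟫_A =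
      ∑ i ∈ s, ∑ j ∈ t, star (a i) * ⟪x i, y j⟫_A * b j := by
  rw [inner_sum_left]
  simp only [inner_op_smul_left, inner_sum_right, inner_op_smul_right, mul_assoc]

end Algebraic

variable {A E : Type*} [NonUnitalCStarAlgebra A] [PartialOrder A]
  [AddCommGroup E] [Module ℂ E] [SMul Aᵐᵒᵖ E] [Norm E] [CStarModuleOld A E]

lemma inner_smul_right_real {r : ℝ} {x y : E} : ⟪x, r • y⟫_A = r • ⟪x, y⟫_A := by
  rw [← Complex.coe_smul, inner_smul_right_complex, Complex.coe_smul]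

lemma inner_smul_left_real {r : ℝ} {x y : E} : ⟪r • x, y⟫_A = r • ⟪x, y⟫_A := by
  rw [← star_inner, inner_smul_right_real, star_smul, star_trivial, star_inner]

variable (A) in
lemma norm_sq_eq (x : E) : ‖x‖ ^ 2 = ‖⟪x, x⟫_A‖ := by
  rw [norm_eq_sqrt_norm_inner_self (A := A) x, Real.sq_sqrt (norm_nonneg _)]

variable [StarOrderedRing A]

lemma inner_mul_inner_swap_le (x y : E) : ⟪y, x⟫_A * ⟪x, y⟫_A ≤ ‖x‖ ^ 2 • ⟪y, y⟫_A := by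
  rcases eq_or_ne x 0 with rfl | hx
  · simpa [inner_zero_right] using smul_nonneg (sq_nonneg ‖(0 : E)‖) (inner_self_nonneg (x := y))
  have hr : 0 < ‖x‖ ^ 2 := by
    rw [norm_sq_eq A x]
    exact norm_pos_iff.mpr (inner_self.not.mpr hx)
  set r : ℝ := ‖x‖ ^ 2
  -- Cauchy–Schwarz is the case `a = ⟪x, y⟫` of this.
  have key (a : A) : (0 : A) ≤ r • (star a * a) - r • (star a * ⟪x, y⟫_A)
      - r • (⟪y, x⟫_A * a) + r • (r • ⟪y, y⟫_A) :=
    calc (0 : A) ≤ ⟪op a • x - r • y, op a • x - r • y⟫_A := inner_self_nonneg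
      _ = star a * ⟪x, x⟫_A * a - r • (star a * ⟪x, y⟫_A)
            - r • (⟪y, x⟫_A * a) + r • (r • ⟪y, y⟫_A) := by
          simp only [inner_sub_left, inner_sub_right, inner_op_smul_left, inner_op_smul_right,
            inner_smul_left_real, inner_smul_right_real, smul_mul_assoc,
            smul_sub, sub_mul, mul_assoc]
          abel
      _ ≤ _ := by
          gcongr
          calc _ ≤ ‖⟪x, x⟫_A‖ • (star a * a) :=
                CStarAlgebra.star_left_conjugate_le_norm_smul (star_inner x x)
            _ = r • (star a * a) := by rw [← norm_sq_eq A x]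
  have := key ⟪x, y⟫_A
  rw [star_inner, sub_self, zero_sub, le_neg_add_iff_add_le, add_zero] at this
  exact (smul_le_smul_iff_of_pos_left hr).mp this

end CStarModuleOld

open CStarModuleOld

theorem inner_representation_quadratic_bound_general
    {S : Type*} [Semigroup S] [StarMul S]
    {A : Type*} [NonUnitalCStarAlgebra A] [PartialOrder A] [StarOrderedRing A]
    {E : Type*} [NormedAddCommGroup E] [NormedSpace ℂ E] [SMul Aᵐᵒᵖ E]
    [CStarModuleOld A E]
    (ω : S → A) (e : S → E)
    (he : ∀ s t : S, inner (𝕜 := A) (e s) (e t) = ω (star s * t))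
    (v : E) (hv : ∀ s : S, ω s = inner (𝕜 := A) v (e s)) :
    ∀ (n : ℕ) (s : Fin n → S) (a : Fin n → A),
      ∑ i, ∑ j, star (a i) * star (ω (s i)) * ω (s j) * a j ≤
        (‖v‖ ^ 2) • ∑ i, ∑ j, star (a i) * ω (star (s i) * s j) * a j := by
  intro n s a
  set x : E := ∑ j, op (a j) • e (s j)
  have hvx : ⟪v, x⟫_A = ∑ j, ω (s j) * a j := by
    simp only [x, inner_sum_right, inner_op_smul_right, hv]
  have hxv : ⟪x, v⟫_A = ∑ i, star (a i) * star (ω (s i)) := by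
    simp only [← star_inner v, hvx, star_sum, star_mul]
  have hxx : ⟪x, x⟫_A = ∑ i, ∑ j, star (a i) * ω (star (s i) * s j) * a j := by
    simp only [x, inner_sum_op_smul_sum_op_smul, he]
  calc ∑ i, ∑ j, star (a i) * star (ω (s i)) * ω (s j) * a j = ⟪x, v⟫_A * ⟪v, x⟫_A := by
        simp only [hxv, hvx, Finset.sum_mul_sum, mul_assoc]
    _ ≤ ‖v‖ ^ 2 • ⟪x, x⟫_A := inner_mul_inner_swap_le v x
    _ = _ := by rw [hxx]

/-- If `ω(s) = ⟪v, e s⟫` with `⟪e s, e t⟫ = ω(s⋆ t)` in a Hilbert `A`-module, then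
`∑ (a i)⋆ ω(s i)⋆ ω(s j) (a j) ≤ ‖v‖² • ∑ (a i)⋆ ω((s i)⋆ (s j)) (a j)`. -/
theorem inner_representation_quadratic_bound
    {S : Type*} [Semigroup S] [StarMul S]
    {A : Type*} [NonUnitalCStarAlgebra A] [PartialOrder A] [StarOrderedRing A]
    {E : Type*} [NormedAddCommGroup E] [NormedSpace ℂ E] [SMul Aᵐᵒᵖ E]
    [CStarModuleOld A E] [CompleteSpace E]
    (ω : S → A) (e : S → E)
    (he : ∀ s t : S, inner (𝕜 := A) (e s) (e t) = ω (star s * t))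
    (v : E) (hv : ∀ s : S, ω s = inner (𝕜 := A) v (e s)) :
    ∀ (n : ℕ) (s : Fin n → S) (a : Fin n → A),
      ∑ i, ∑ j, star (a i) * star (ω (s i)) * ω (s j) * a j ≤
        (‖v‖ ^ 2) • ∑ i, ∑ j, star (a i) * ω (star (s i) * s j) * a j :=
  inner_representation_quadratic_bound_general ω e he v hv
end

section
/- Let S be a *-semigroup, A a C*-algebra, E a Hilbert A-module, Φ a *-representation of S on E by bounded A-linear operators, v ∈ E, and define ω : S → A by ω(s) = ⟪v, Φ(s) v⟫. Then: (1) ω is A-positive definite; (2) ω(s⋆) = ω(s)⋆ for all s ∈ S; (3) for all n : ℕ, s : Fin n → S, a : Fin n → A one has ∑_{i,j} (a i)⋆ * ω(s i)⋆ * ω(s j) * (a j) ≤ ‖v‖² • ∑_{i,j} (a i)⋆ * ω((s i)⋆ * (s j)) * (a j); and (4) ‖a⋆ * ω(t⋆ * s⋆ * s * t) * a‖ ≤ ‖Φ(s)‖² · ‖a⋆ * ω(t⋆ * t) * a‖ for all s, t ∈ S and a ∈ A, so that ω satisfies the boundedness condition with the submultiplicative function s ↦ ‖Φ(s)‖². 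-/
open scoped RightActions

/-- The December 2024 Mathlib `CStarModule` (right `A`-module via `SMul Aᵐᵒᵖ E`, inner product
`A`-linear on the right in the second variable). Mathlib's `CStarModule` now uses a left action. -/
class RightCStarModule (A E : Type*) [NonUnitalSemiring A] [StarRing A]
    [Module ℂ A] [AddCommGroup E] [Module ℂ E] [PartialOrder A] [SMul Aᵐᵒᵖ E] [Norm A] [Norm E]
    extends Inner A E where
  inner_add_right {x} {y} {z} : inner x (y + z) = inner x y + inner x z
  inner_self_nonneg {x} : 0 ≤ inner x x
  inner_self {x} : inner x x = 0 ↔ x = 0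
  inner_op_smul_right {a : A} {x y : E} : inner x (y <• a) = inner x y * a
  inner_smul_right_complex {z : ℂ} {x} {y} : inner x (z • y) = z • inner x y
  star_inner x y : star (inner x y) = inner y x
  norm_eq_sqrt_norm_inner_self x : ‖x‖ = Real.sqrt ‖inner x x‖

/-!
Everything reduces to computations with the vectors `Φ (s i) v <• a i`: the relations of a
*-representation give `⟪Φ s v <• a, Φ t v <• b⟫ = a⋆ ω(s⋆ t) b`, so the positive-definiteness
sum is the inner square of `x = ∑ Φ (s i) v <• a i`, and the left-hand side of the third claim is
`⟪x, v⟫ ⟪v, x⟫`, which the Cauchy–Schwarz inequality of a Hilbert module bounds by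
`‖v‖² ⟪x, x⟫`. The boundedness condition is `‖Φ s w‖² ≤ ‖Φ s‖² ‖w‖²` for `w = Φ t v <• a`.
-/

lemma star_sum_mul_mul_sum_mul {R ι : Type*} [NonUnitalSemiring R] [StarRing R]
    (s : Finset ι) (a b : ι → R) :
    star (∑ i ∈ s, b i * a i) * ∑ j ∈ s, b j * a j =
      ∑ i ∈ s, ∑ j ∈ s, star (a i) * star (b i) * b j * a j := by
  simp only [star_sum, star_mul, Finset.sum_mul_sum, mul_assoc]

namespace RightCStarModule

section Algebraic

variable {A : Type*} [NonUnitalRing A] [StarRing A] [Module ℂ A] [PartialOrder A] [Norm A]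
  {E : Type*} [AddCommGroup E] [Module ℂ E] [SMul Aᵐᵒᵖ E] [Norm E] [RightCStarModule A E]

variable (A) in
def innerAddMonoidHomRight (x : E) : E →+ A :=
  AddMonoidHom.mk' (inner A x) fun _ _ => inner_add_right

lemma inner_sub_right {x y z : E} : inner A x (y - z) = inner A x y - inner A x z :=
  map_sub (innerAddMonoidHomRight A x) y z

lemma inner_zero_right {x : E} : inner A x (0 : E) = 0 :=
  map_zero (innerAddMonoidHomRight A x)

lemma inner_sum_right {ι : Type*} {s : Finset ι} {x : E} {y : ι → E} :
    inner A x (∑ i ∈ s, y i) = ∑ i ∈ s, inner A x (y i) :=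
  map_sum (innerAddMonoidHomRight A x) y s

lemma inner_sub_left {x y z : E} : inner A (x - y) z = inner A x z - inner A y z := by
  rw [← star_inner, inner_sub_right, star_sub, star_inner, star_inner]

lemma inner_zero_left {x : E} : inner A (0 : E) x = 0 := by
  rw [← star_inner, inner_zero_right, star_zero]

lemma inner_sum_left {ι : Type*} {s : Finset ι} {x : ι → E} {y : E} :
    inner A (∑ i ∈ s, x i) y = ∑ i ∈ s, inner A (x i) y := by
  rw [← star_inner, inner_sum_right, star_sum]
  simp only [star_inner]

lemma inner_op_smul_left {a : A} {x y : E} : inner A (x <• a) y = star a * inner A x y := by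
  rw [← star_inner, inner_op_smul_right, star_mul, star_inner]

lemma inner_smul_right_real {r : ℝ} {x y : E} : inner A x (r • y) = r • inner A x y := by
  rw [← Complex.coe_smul, inner_smul_right_complex, Complex.coe_smul]

lemma inner_smul_left_real [StarModule ℂ A] {r : ℝ} {x y : E} :
    inner A (r • x) y = r • inner A x y := by
  rw [← star_inner, inner_smul_right_real, ← Complex.coe_smul, star_smul, Complex.star_def,
    Complex.conj_ofReal, Complex.coe_smul, star_inner]

lemma inner_sum_op_smul_sum_op_smul {ι : Type*} {s : Finset ι} {x : ι → E} {a : ι → A} :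
    inner A (∑ i ∈ s, x i <• a i) (∑ j ∈ s, x j <• a j) =
      ∑ i ∈ s, ∑ j ∈ s, star (a i) * inner A (x i) (x j) * a j := by
  rw [inner_sum_left]
  refine Finset.sum_congr rfl fun i _ => ?_
  rw [inner_sum_right]
  simp only [inner_op_smul_left, inner_op_smul_right, mul_assoc]

end Algebraic

section Normed

variable {A : Type*} [NonUnitalNormedRing A] [StarRing A] [Module ℂ A] [PartialOrder A]
  {E : Type*} [AddCommGroup E] [Module ℂ E] [SMul Aᵐᵒᵖ E] [Norm E] [RightCStarModule A E]

lemma norm_sq_eq_norm_inner_self {x : E} : ‖x‖ ^ 2 = ‖inner A x x‖ := by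
  rw [norm_eq_sqrt_norm_inner_self (A := A) x, Real.sq_sqrt (norm_nonneg _)]

lemma norm_inner_self_apply_le {F : Type*} [NormedAddCommGroup F] [NormedSpace ℂ F] [SMul Aᵐᵒᵖ F]
    [RightCStarModule A F] (T : F →L[ℂ] F) (x : F) :
    ‖inner A (T x) (T x)‖ ≤ ‖T‖ ^ 2 * ‖inner A x x‖ := by
  rw [← norm_sq_eq_norm_inner_self, ← norm_sq_eq_norm_inner_self, ← mul_pow]
  exact pow_le_pow_left₀ (norm_nonneg _) (T.le_opNorm x) 2

end Normed

section CStar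

variable {A : Type*} [NonUnitalCStarAlgebra A] [PartialOrder A] [StarOrderedRing A]
  {E : Type*} [NormedAddCommGroup E] [NormedSpace ℂ E] [SMul Aᵐᵒᵖ E] [RightCStarModule A E]

lemma inner_mul_inner_swap_le {x y : E} :
    inner A x y * inner A y x ≤ ‖y‖ ^ 2 • inner A x x := by
  rcases eq_or_ne y 0 with rfl | hy
  · simp [inner_zero_left]
  set b := inner A y x
  set r := ‖y‖ ^ 2
  have hxy : inner A x y = star b := (star_inner y x).symm
  -- expand `0 ≤ ⟪y <• b - r • x, y <• b - r • x⟫` and bound `b⋆ ⟪y, y⟫ b` by `‖⟪y, y⟫‖ b⋆ b`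
  have key : 0 ≤ -(r • (star b * b)) + r • (r • inner A x x) :=
    calc (0 : A) ≤ inner A (y <• b - r • x) (y <• b - r • x) := inner_self_nonneg
      _ = star b * inner A y y * b - r • (star b * b) - r • (star b * b)
            + r • (r • inner A x x) := by
        simp only [inner_sub_left, inner_sub_right, inner_op_smul_left, inner_op_smul_right,
          inner_smul_left_real, inner_smul_right_real, hxy, smul_mul_assoc,
          mul_assoc, sub_mul, smul_sub]
        abel
      _ ≤ r • (star b * b) - r • (star b * b) - r • (star b * b) + r • (r • inner A x x) := by
        gcongr
        rw [show r = ‖inner A y y‖ from norm_sq_eq_norm_inner_self]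
        exact CStarAlgebra.star_left_conjugate_le_norm_smul (star_inner y y)
      _ = -(r • (star b * b)) + r • (r • inner A x x) := by abel
  rw [le_neg_add_iff_add_le, add_zero] at key
  rw [hxy]
  exact (smul_le_smul_iff_of_pos_left (pow_pos (norm_pos_iff.mpr hy) 2)).mp key

end CStar

end RightCStarModule

open RightCStarModule in
theorem dilation_necessity_general
    {S : Type*} [Semigroup S] [StarMul S]
    {A : Type*} [NonUnitalCStarAlgebra A] [PartialOrder A] [StarOrderedRing A]
    {E : Type*} [NormedAddCommGroup E] [NormedSpace ℂ E] [SMul Aᵐᵒᵖ E]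
    [RightCStarModule A E]
    (Φ : S → E →L[ℂ] E)
    (hA : ∀ (s : S) (x : E) (a : A), Φ s (x <• a) = (Φ s x) <• a)
    (hmul : ∀ s t : S, Φ (s * t) = (Φ s).comp (Φ t))
    (hstar : ∀ (s : S) (x y : E), inner (𝕜 := A) (Φ s x) y = inner (𝕜 := A) x (Φ (star s) y))
    (v : E) (ω : S → A) (hω : ∀ s : S, ω s = inner (𝕜 := A) v (Φ s v)) :
    (∀ (n : ℕ) (s : Fin n → S) (a : Fin n → A),
      0 ≤ ∑ i, ∑ j, star (a i) * ω (star (s i) * s j) * a j) ∧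
    (∀ s : S, ω (star s) = star (ω s)) ∧
    (∀ (n : ℕ) (s : Fin n → S) (a : Fin n → A),
      ∑ i, ∑ j, star (a i) * star (ω (s i)) * ω (s j) * a j ≤
        (‖v‖ ^ 2) • ∑ i, ∑ j, star (a i) * ω (star (s i) * s j) * a j) ∧
    (∀ (s t : S) (a : A),
      ‖star a * ω (star t * star s * s * t) * a‖ ≤
        ‖Φ s‖ ^ 2 * ‖star a * ω (star t * t) * a‖) := by
  have inner_eq_ω : ∀ s t : S, inner A (Φ s v) (Φ t v) = ω (star s * t) := fun s t => by
    rw [hω, hstar, ← ContinuousLinearMap.comp_apply, ← hmul]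
  have gram : ∀ (n : ℕ) (s : Fin n → S) (a : Fin n → A),
      ∑ i, ∑ j, star (a i) * ω (star (s i) * s j) * a j =
        inner A (∑ i, Φ (s i) v <• a i) (∑ j, Φ (s j) v <• a j) := by
    intro n s a
    simp only [inner_sum_op_smul_sum_op_smul, inner_eq_ω]
  refine ⟨fun n s a => gram n s a ▸ inner_self_nonneg, fun s => ?_, fun n s a => ?_,
    fun s t a => ?_⟩
  · rw [hω, hω, ← star_inner, hstar, star_star]
  · set x := ∑ j, Φ (s j) v <• a j
    have hvx : inner A v x = ∑ j, ω (s j) * a j := by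
      simp only [x, inner_sum_right, inner_op_smul_right, hω]
    calc ∑ i, ∑ j, star (a i) * star (ω (s i)) * ω (s j) * a j
        = inner A x v * inner A v x := by
          rw [← star_inner, hvx, star_sum_mul_mul_sum_mul]
      _ ≤ ‖v‖ ^ 2 • inner A x x := inner_mul_inner_swap_le
      _ = _ := by rw [gram]
  · have h := norm_inner_self_apply_le (A := A) (Φ s) (Φ t v <• a)
    rw [hA, ← ContinuousLinearMap.comp_apply, ← hmul, inner_op_smul_left, inner_op_smul_right,
      inner_op_smul_left, inner_op_smul_right, inner_eq_ω, inner_eq_ω, star_mul] at h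
    simpa only [mul_assoc] using h

/-- Necessity part of the dilation theorem: if `ω(s) = ⟪v, Φ(s) v⟫` for a
*-representation `Φ` of a *-semigroup `S` on a Hilbert `A`-module `E`, then `ω` is
`A`-positive definite, Hermitian symmetric, satisfies the extension-property inequality with
constant `‖v‖²`, and satisfies the boundedness condition with `c(s) = ‖Φ(s)‖²`. -/
theorem dilation_necessity
    {S : Type*} [Semigroup S] [StarMul S]
    {A : Type*} [NonUnitalCStarAlgebra A] [PartialOrder A] [StarOrderedRing A]
    {E : Type*} [NormedAddCommGroup E] [NormedSpace ℂ E] [SMul Aᵐᵒᵖ E]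
    [RightCStarModule A E] [CompleteSpace E]
    (Φ : S → E →L[ℂ] E)
    (hA : ∀ (s : S) (x : E) (a : A), Φ s (x <• a) = (Φ s x) <• a)
    (hmul : ∀ s t : S, Φ (s * t) = (Φ s).comp (Φ t))
    (hstar : ∀ (s : S) (x y : E), inner (𝕜 := A) (Φ s x) y = inner (𝕜 := A) x (Φ (star s) y))
    (v : E) (ω : S → A) (hω : ∀ s : S, ω s = inner (𝕜 := A) v (Φ s v)) :
    (∀ (n : ℕ) (s : Fin n → S) (a : Fin n → A),
      0 ≤ ∑ i, ∑ j, star (a i) * ω (star (s i) * s j) * a j) ∧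
    (∀ s : S, ω (star s) = star (ω s)) ∧
    (∀ (n : ℕ) (s : Fin n → S) (a : Fin n → A),
      ∑ i, ∑ j, star (a i) * star (ω (s i)) * ω (s j) * a j ≤
        (‖v‖ ^ 2) • ∑ i, ∑ j, star (a i) * ω (star (s i) * s j) * a j) ∧
    (∀ (s t : S) (a : A),
      ‖star a * ω (star t * star s * s * t) * a‖ ≤
        ‖Φ s‖ ^ 2 * ‖star a * ω (star t * t) * a‖) :=
  dilation_necessity_general Φ hA hmul hstar v ω hω
end

section
/- Let S and A be C*-algebras and ω : S → A a linear map which is A-positive definite with respect to the multiplicative *-semigroup structure of S. Then for all s, t ∈ S, ω(t⋆ * s⋆ * s * t) ≤ ‖s‖² • ω(t⋆ * t) in A; consequently ‖a⋆ * ω(t⋆ * s⋆ * s * t) * a‖ ≤ ‖s‖² · ‖a⋆ * ω(t⋆ * t) * a‖ for all a ∈ A, i.e. ω satisfies the boundedness condition with c(s) = ‖s‖². -/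
/-! Positivity of `ω` on the elements `star y * y` already follows from the case `n = 1` of
positive definiteness: an element `b` of a C⋆-algebra with `star a * b * a ≥ 0` for all `a` is the
limit of such conjugates along an approximate unit, hence nonnegative because the positive cone is
closed. Since nonnegative elements of `S` are of the form `star y * y`, `ω` is then monotone, and
it remains to apply it to `star t * (star s * s) * t ≤ ‖star s * s‖ • star t * t`. -/

open Filter Topology

lemma Filter.IsIncreasingApproximateUnit.tendsto_mul_mul_self
    {A : Type*} [NonUnitalCStarAlgebra A] [PartialOrder A] [StarOrderedRing A]
    {l : Filter A} (hl : l.IsIncreasingApproximateUnit) (b : A) :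
    Tendsto (fun e ↦ e * b * e) l (𝓝 b) := by
  have hbdd : IsBoundedUnder (· ≤ ·) l (norm ∘ id) :=
    isBoundedUnder_of_eventually_le hl.eventually_norm
  have hsmall : Tendsto (fun e ↦ e * (b * e - b)) l (𝓝 0) :=
    isBoundedUnder_le_mul_tendsto_zero hbdd (by simpa using (hl.tendsto_mul_left b).sub_const b)
  simpa [mul_sub, mul_assoc] using hsmall.add (hl.tendsto_mul_right b)

lemma monotone_of_map_star_mul_self_nonneg
    {S : Type*} [NonUnitalCStarAlgebra S] [PartialOrder S] [StarOrderedRing S]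
    {A F : Type*} [AddCommGroup A] [PartialOrder A] [IsOrderedAddMonoid A]
    [FunLike F S A] [AddMonoidHomClass F S A] {ω : F}
    (h : ∀ y, 0 ≤ ω (star y * y)) : Monotone ω := by
  intro x y hxy
  rw [← sub_nonneg] at hxy ⊢
  obtain ⟨z, hz⟩ := CStarAlgebra.nonneg_iff_eq_star_mul_self.mp hxy
  rw [← map_sub, hz]
  exact h z

namespace CStarAlgebra

variable {A : Type*} [NonUnitalCStarAlgebra A] [PartialOrder A] [StarOrderedRing A]

lemma nonneg_of_forall_star_left_conjugate_nonneg {b : A}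
    (h : ∀ a : A, 0 ≤ star a * b * a) : 0 ≤ b := by
  have hl := increasingApproximateUnit A
  refine ge_of_tendsto (hl.tendsto_mul_mul_self b) ?_
  filter_upwards [hl.eventually_star_eq] with e he
  simpa [he] using h e

lemma star_left_conjugate_le_norm_sq_smul (s t : A) :
    star t * star s * s * t ≤ ‖s‖ ^ 2 • (star t * t) := by
  simpa [mul_assoc, CStarRing.norm_star_mul_self, sq] using
    star_left_conjugate_le_norm_smul (a := t) (b := star s * s)

lemma norm_star_left_conjugate_le_of_le_smul {x y : A} {r : ℝ}
    (hx : 0 ≤ x) (hr : 0 ≤ r) (hxy : x ≤ r • y) (a : A) :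
    ‖star a * x * a‖ ≤ r * ‖star a * y * a‖ := by
  have hconj := star_left_conjugate_le_conjugate hxy a
  rw [mul_smul_comm, smul_mul_assoc] at hconj
  calc ‖star a * x * a‖ ≤ ‖r • (star a * y * a)‖ :=
        norm_le_norm_of_nonneg_of_le (star_left_conjugate_nonneg hx a) hconj
    _ = r * ‖star a * y * a‖ := by rw [norm_smul, Real.norm_of_nonneg hr]

end CStarAlgebra

/-- A linear `A`-positive definite map `ω` between C*-algebras satisfies
`ω(t⋆ s⋆ s t) ≤ ‖s‖² • ω(t⋆ t)`, hence the boundedness condition with `c(s) = ‖s‖²`. -/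
theorem cstar_boundedness_condition
    {S : Type*} [NonUnitalCStarAlgebra S] [PartialOrder S] [StarOrderedRing S]
    {A : Type*} [NonUnitalCStarAlgebra A] [PartialOrder A] [StarOrderedRing A]
    (ω : S →ₗ[ℂ] A)
    (hpd : ∀ (n : ℕ) (s : Fin n → S) (a : Fin n → A),
      0 ≤ ∑ i, ∑ j, star (a i) * ω (star (s i) * s j) * a j) :
    ∀ s t : S,
      ω (star t * star s * s * t) ≤ (‖s‖ ^ 2) • ω (star t * t) ∧
      ∀ a : A, ‖star a * ω (star t * star s * s * t) * a‖ ≤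
        ‖s‖ ^ 2 * ‖star a * ω (star t * t) * a‖ := by
  intro s t
  have hpos (y : S) : 0 ≤ ω (star y * y) :=
    CStarAlgebra.nonneg_of_forall_star_left_conjugate_nonneg fun a ↦ by
      simpa using hpd 1 ![y] ![a]
  have hle : ω (star t * star s * s * t) ≤ ‖s‖ ^ 2 • ω (star t * t) := by
    simpa only [LinearMap.map_smul_of_tower] using
      monotone_of_map_star_mul_self_nonneg hpos
        (CStarAlgebra.star_left_conjugate_le_norm_sq_smul s t)
  have hnonneg : 0 ≤ ω (star t * star s * s * t) := by
    simpa only [star_mul, mul_assoc] using hpos (s * t)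
  exact ⟨hle, CStarAlgebra.norm_star_left_conjugate_le_of_le_smul hnonneg (by positivity) hle⟩
end
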